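/- Fix t₁, t₂ ∈ [−1,1], set x_i = ξ_β(t_i) with ξ_β(t) = sign(t)(1−exp(−|t|β)), fix z ∈ (0,1) and m₁ = (−log z)/β. Then F^ed_β(x₁,x₂)^{m₁} → z^{φ^ed(t₁,t₂)} as β → ∞, where φ^ed(t₁,t₂) = min(|t₁|,|t₂|) if t₁t₂ > 0 and 0 otherwise. -/
import Mathlib


open Filter Real

/-- `ξ_β(t) = sign(t)·(1 − exp(−|t|β))`. -/
noncomputable def xiMap (β t : ℝ) : ℝ := Real.sign t * (1 - Real.exp (-|t| * β))

/-- `F^ed_β(x₁,x₂) = (1−x₁x₂)/2 + (1+x₁x₂)/2·e^{−β}`. -/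
noncomputable def Fed (β x₁ x₂ : ℝ) : ℝ :=
  (1 - x₁ * x₂) / 2 + (1 + x₁ * x₂) / 2 * Real.exp (-β)

private lemma tendsto_div_atTop_of_abs_le {F : ℝ → ℝ} (c : ℝ)
    (h : ∀ᶠ β in atTop, |F β| ≤ c) :
    Tendsto (fun β => F β / β) atTop (nhds 0) := by
  refine squeeze_zero_norm' (a := fun β : ℝ => c / β) ?_ ?_
  · filter_upwards [h, eventually_gt_atTop (0:ℝ)] with β hb hβ
    rw [Real.norm_eq_abs, abs_div, abs_of_pos hβ]
    gcongr
  · exact tendsto_const_nhds.div_atTop tendsto_id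

private lemma final_step (z : ℝ) (hz0 : 0 < z) (φ : ℝ) {F : ℝ → ℝ}
    (hpos : ∀ᶠ β in atTop, 0 < F β)
    (hlog : Tendsto (fun β => Real.log (F β) / β) atTop (nhds (-φ))) :
    Tendsto (fun β => F β ^ (-Real.log z / β)) atTop (nhds (z ^ φ)) := by
  have h2 : Tendsto (fun β => Real.exp ((Real.log (F β) / β) * (-Real.log z))) atTop
      (nhds (Real.exp (-φ * -Real.log z))) :=
    (Real.continuous_exp.continuousAt.tendsto.comp (hlog.mul_const _))
  have hzφ : z ^ φ = Real.exp (-φ * -Real.log z) := by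
    rw [Real.rpow_def_of_pos hz0]; ring_nf
  rw [hzφ]
  refine h2.congr' ?_
  filter_upwards [hpos, eventually_gt_atTop (0:ℝ)] with β hF hβ
  rw [Real.rpow_def_of_pos hF]
  congr 1
  field_simp

private lemma log_abs_le_of_bounds {x : ℝ} (h1 : 1/2 ≤ x) (h2 : x ≤ 2) :
    |Real.log x| ≤ Real.log 2 := by
  have hx0 : (0:ℝ) < x := by linarith
  rw [abs_le]
  constructor
  · have := Real.log_le_log (by norm_num : (0:ℝ) < 1/2) h1
    rw [show (1/2 : ℝ) = 2⁻¹ by norm_num, Real.log_inv] at this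
    linarith
  · exact Real.log_le_log hx0 h2

private lemma caseB_bounds (t₁ t₂ : ℝ)
    (ht₁ : t₁ ∈ Set.Icc (-1 : ℝ) 1)
    (h : 0 < t₁ * t₂) :
    ∀ᶠ β in atTop,
      1/2 ≤ Fed β (xiMap β t₁) (xiMap β t₂) * Real.exp (min |t₁| |t₂| * β) ∧
      Fed β (xiMap β t₁) (xiMap β t₂) * Real.exp (min |t₁| |t₂| * β) ≤ 2 := by
  have hsign : Real.sign t₁ * Real.sign t₂ = 1 := by
    rcases mul_pos_iff.mp h with ⟨h1, h2⟩ | ⟨h1, h2⟩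
    · rw [Real.sign_of_pos h1, Real.sign_of_pos h2]; norm_num
    · rw [Real.sign_of_neg h1, Real.sign_of_neg h2]; norm_num
  set m := min |t₁| |t₂| with hm
  have hms : m ≤ |t₁| := min_le_left _ _
  have hmu : m ≤ |t₂| := min_le_right _ _
  have hm1 : m ≤ 1 := le_trans hms (abs_le.mpr ⟨ht₁.1, ht₁.2⟩)
  filter_upwards [eventually_ge_atTop (0:ℝ)] with β hβ
  simp only [Fed, xiMap]
  set A := Real.exp (-|t₁| * β) with hA
  set B := Real.exp (-|t₂| * β) with hB
  set E := Real.exp (-β) with hE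
  set M := Real.exp (m * β) with hM
  have hA0 : 0 < A := Real.exp_pos _
  have hA1 : A ≤ 1 := Real.exp_le_one_iff.mpr (by nlinarith [abs_nonneg t₁])
  have hB0 : 0 < B := Real.exp_pos _
  have hB1 : B ≤ 1 := Real.exp_le_one_iff.mpr (by nlinarith [abs_nonneg t₂])
  have hM0 : 0 < M := Real.exp_pos _
  have hAM : A * M ≤ 1 := by
    rw [hA, hM, ← Real.exp_add]
    exact Real.exp_le_one_iff.mpr (by nlinarith)
  have hBM : B * M ≤ 1 := by
    rw [hB, hM, ← Real.exp_add]
    exact Real.exp_le_one_iff.mpr (by nlinarith)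
  have hEM : E * M ≤ 1 := by
    rw [hE, hM, ← Real.exp_add]
    exact Real.exp_le_one_iff.mpr (by nlinarith)
  have hE0 : 0 < E := Real.exp_pos _
  have hx : (Real.sign t₁ * (1 - A)) * (Real.sign t₂ * (1 - B))
      = (Real.sign t₁ * Real.sign t₂) * ((1 - A) * (1 - B)) := by ring
  rw [hx, hsign, one_mul]
  have hmaxM : A * M = 1 ∨ B * M = 1 := by
    rcases min_cases |t₁| |t₂| with ⟨he, _⟩ | ⟨he, _⟩
    · left
      rw [hA, hM, ← Real.exp_add, hm.trans he,
        show -|t₁| * β + |t₁| * β = 0 by ring, Real.exp_zero]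
    · right
      rw [hB, hM, ← Real.exp_add, hm.trans he,
        show -|t₂| * β + |t₂| * β = 0 by ring, Real.exp_zero]
  constructor
  · rcases hmaxM with heq | heq
    · nlinarith [mul_nonneg (mul_nonneg (by linarith : (0:ℝ) ≤ 1 - A) hB0.le) hM0.le,
        mul_nonneg (mul_nonneg (by nlinarith : (0:ℝ) ≤ 1 + (1-A)*(1-B)) hE0.le) hM0.le]
    · nlinarith [mul_nonneg (mul_nonneg (by linarith : (0:ℝ) ≤ 1 - B) hA0.le) hM0.le,
        mul_nonneg (mul_nonneg (by nlinarith : (0:ℝ) ≤ 1 + (1-A)*(1-B)) hE0.le) hM0.le]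
  · have h5 : (1-A)*(1-B) ≤ 1 := by nlinarith
    have h3 : 0 ≤ (1-A)*(1-B) := mul_nonneg (by linarith) (by linarith)
    have h4 : (1 + (1-A)*(1-B)) * (E*M) ≤ 1 + (1-A)*(1-B) :=
      mul_le_of_le_one_right (by linarith) hEM
    nlinarith [mul_nonneg (mul_nonneg hA0.le hB0.le) hM0.le]

private lemma caseA_bounds (t₁ t₂ : ℝ) (h : ¬ 0 < t₁ * t₂) :
    ∀ᶠ β in atTop, 1/2 ≤ Fed β (xiMap β t₁) (xiMap β t₂) ∧
      Fed β (xiMap β t₁) (xiMap β t₂) ≤ 1 := by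
  have hq : -1 ≤ Real.sign t₁ * Real.sign t₂ ∧ Real.sign t₁ * Real.sign t₂ ≤ 0 := by
    rcases mul_nonpos_iff.mp (not_lt.mp h) with ⟨h1, h2⟩ | ⟨h1, h2⟩
    · rcases eq_or_lt_of_le h1 with h1' | h1'
      · simp [← h1', Real.sign_zero]
      · rcases eq_or_lt_of_le h2 with h2' | h2'
        · simp [h2', Real.sign_zero]
        · rw [Real.sign_of_pos h1', Real.sign_of_neg h2']; norm_num
    · rcases eq_or_lt_of_le h1 with h1' | h1'
      · simp [h1', Real.sign_zero]
      · rcases eq_or_lt_of_le h2 with h2' | h2'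
        · simp [← h2', Real.sign_zero]
        · rw [Real.sign_of_neg h1', Real.sign_of_pos h2']; norm_num
  filter_upwards [eventually_ge_atTop (0:ℝ)] with β hβ
  simp only [Fed, xiMap]
  set A := Real.exp (-|t₁| * β) with hA
  set B := Real.exp (-|t₂| * β) with hB
  set E := Real.exp (-β) with hE
  have hA0 : 0 < A := Real.exp_pos _
  have hA1 : A ≤ 1 := Real.exp_le_one_iff.mpr (by nlinarith [abs_nonneg t₁])
  have hB0 : 0 < B := Real.exp_pos _
  have hB1 : B ≤ 1 := Real.exp_le_one_iff.mpr (by nlinarith [abs_nonneg t₂])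
  have hE0 : 0 < E := Real.exp_pos _
  have hE1 : E ≤ 1 := Real.exp_le_one_iff.mpr (by linarith)
  have hx : (Real.sign t₁ * (1 - A)) * (Real.sign t₂ * (1 - B))
      = (Real.sign t₁ * Real.sign t₂) * ((1 - A) * (1 - B)) := by ring
  rw [hx]
  set q := Real.sign t₁ * Real.sign t₂ with hqd
  set p := q * ((1 - A) * (1 - B)) with hp
  have hr0 : 0 ≤ (1 - A) * (1 - B) := mul_nonneg (by linarith) (by linarith)
  have hr1 : (1 - A) * (1 - B) ≤ 1 := by nlinarith
  have hp0 : p ≤ 0 := mul_nonpos_of_nonpos_of_nonneg hq.2 hr0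
  have hp1 : -1 ≤ p := by nlinarith [hq.1, hq.2]
  constructor
  · nlinarith [mul_nonneg (by linarith : (0:ℝ) ≤ 1 + p) hE0.le]
  · nlinarith [mul_le_of_le_one_right (by linarith : (0:ℝ) ≤ 1 + p) hE1]

open Classical in
/-- With `x_i = ξ_β(t_i)` and `m₁ = (−log z)/β`,
`F^ed_β(x₁,x₂)^{m₁} → z^{φ^ed(t₁,t₂)}` as `β → ∞`, where
`φ^ed(t₁,t₂) = min(|t₁|,|t₂|)` if `t₁t₂ > 0` and `0` otherwise. -/
theorem tendsto_Fed_rpow (t₁ t₂ : ℝ)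
    (ht₁ : t₁ ∈ Set.Icc (-1 : ℝ) 1) (ht₂ : t₂ ∈ Set.Icc (-1 : ℝ) 1)
    (z : ℝ) (hz : z ∈ Set.Ioo (0 : ℝ) 1) :
    Tendsto
      (fun β : ℝ => (Fed β (xiMap β t₁) (xiMap β t₂)) ^ (-Real.log z / β))
      atTop
      (nhds (z ^ (if 0 < t₁ * t₂ then min |t₁| |t₂| else 0))) := by
  obtain ⟨hz0, hz1⟩ := hz
  by_cases h : 0 < t₁ * t₂
  · -- Case B : same signs
    rw [if_pos h]
    have hsign : Real.sign t₁ * Real.sign t₂ = 1 := by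
      rcases mul_pos_iff.mp h with ⟨h1, h2⟩ | ⟨h1, h2⟩
      · rw [Real.sign_of_pos h1, Real.sign_of_pos h2]; norm_num
      · rw [Real.sign_of_neg h1, Real.sign_of_neg h2]; norm_num
    set m := min |t₁| |t₂| with hm
    have hms : m ≤ |t₁| := min_le_left _ _
    have hmu : m ≤ |t₂| := min_le_right _ _
    have hm1 : m ≤ 1 := le_trans hms (abs_le.mpr ⟨ht₁.1, ht₁.2⟩)
    have hbd := caseB_bounds t₁ t₂ ht₁ h
    rw [← hm] at hbd
    have hpos : ∀ᶠ β in atTop, 0 < Fed β (xiMap β t₁) (xiMap β t₂) := by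
      filter_upwards [hbd] with β hb
      have hM0 : 0 < Real.exp (m * β) := Real.exp_pos _
      nlinarith [hb.1]
    refine final_step z hz0 m hpos ?_
    have habs : ∀ᶠ β in atTop,
        |Real.log (Fed β (xiMap β t₁) (xiMap β t₂) * Real.exp (m * β))| ≤ Real.log 2 := by
      filter_upwards [hbd] with β hb
      exact log_abs_le_of_bounds hb.1 hb.2
    have h0 := tendsto_div_atTop_of_abs_le (Real.log 2) habs
    have hsub : Tendsto (fun β =>
        Real.log (Fed β (xiMap β t₁) (xiMap β t₂) * Real.exp (m * β)) / β - m)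
        atTop (nhds (-m)) := by
      have := h0.sub (tendsto_const_nhds (x := m))
      simpa using this
    refine hsub.congr' ?_
    filter_upwards [hpos, eventually_gt_atTop (0:ℝ)] with β hF hβ
    rw [Real.log_mul (ne_of_gt hF) (Real.exp_ne_zero _), Real.log_exp]
    field_simp
    ring
  · -- Case A : opposite signs or zero
    rw [if_neg h]
    have hbd := caseA_bounds t₁ t₂ h
    have hpos : ∀ᶠ β in atTop, 0 < Fed β (xiMap β t₁) (xiMap β t₂) := by
      filter_upwards [hbd] with β hb; linarith [hb.1]
    refine final_step z hz0 0 hpos ?_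
    rw [neg_zero]
    refine tendsto_div_atTop_of_abs_le (Real.log 2) ?_
    filter_upwards [hbd] with β hb
    exact log_abs_le_of_bounds hb.1 (by linarith [hb.2])
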